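/- Let E ⊆ {1,…,n} be a subset and M ⊆ ℤⁿ a ℤ-submodule. If M is weak-transversal to E, then Sat(M) is transversal to E; that is, Sat(M) is saturated and admits a system of ℤ-module generators all lying in ℤⁿ_E. -/

import Mathlib

/-! Summing the generators of `M` gives `σ ∈ M` that is nonnegative on `E` and positive on every
coordinate of `E` where `M` (equivalently `Sat M`) does not vanish. Given any finite generating
family `bᵢ` of `Sat M`, adding a large enough multiple `Nᵢ • σ` to each `bᵢ` makes its
`E`-coordinates nonnegative, and together with `σ` these still generate `Sat M`. -/

/-- The saturation of a `ℤ`-submodule `M ⊆ ℤⁿ`: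
`Sat(M) = {α ∈ ℤⁿ ∣ λ • α ∈ M for some nonzero λ ∈ ℤ}`. -/
def Sat {n : ℕ} (M : Submodule ℤ (Fin n → ℤ)) : Submodule ℤ (Fin n → ℤ) where
  carrier := {α | ∃ l : ℤ, l ≠ 0 ∧ l • α ∈ M}
  zero_mem' := ⟨1, one_ne_zero, by simp⟩
  add_mem' := by
    rintro a b ⟨l, hl, hla⟩ ⟨m, hm, hmb⟩
    refine ⟨l * m, mul_ne_zero hl hm, ?_⟩
    have h1 : (l * m) • a ∈ M := by rw [mul_comm, mul_smul]; exact M.smul_mem m hla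
    have h2 : (l * m) • b ∈ M := by rw [mul_smul]; exact M.smul_mem l hmb
    rw [smul_add]; exact M.add_mem h1 h2
  smul_mem' := by
    rintro c a ⟨l, hl, hla⟩
    exact ⟨l, hl, by rw [smul_comm]; exact M.smul_mem c hla⟩

/-- `M ⊆ ℤⁿ` is weak-transversal to `E ⊆ {1,…,n}` if it admits a finite system of
`ℤ`-module generators all of whose coordinates indexed by `E` are nonnegative. -/
def WeakTransversal {n : ℕ} (M : Submodule ℤ (Fin n → ℤ)) (E : Set (Fin n)) : Prop :=
  ∃ (ℓ : ℕ) (α : Fin ℓ → Fin n → ℤ),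
    (∀ i, ∀ j ∈ E, 0 ≤ α i j) ∧ Submodule.span ℤ (Set.range α) = M

/-- `E_M = {j ∈ E ∣ prⱼ(M) ≠ 0}`. -/
def EM {n : ℕ} (M : Submodule ℤ (Fin n → ℤ)) (E : Set (Fin n)) : Set (Fin n) :=
  {j ∈ E | ∃ γ ∈ M, γ j ≠ 0}

theorem Submodule.span_insert_range_add_smul {R M ι : Type*} [Ring R] [AddCommGroup M]
    [Module R M] (x : M) (b : ι → M) (c : ι → R) :
    span R (insert x (Set.range fun i => b i + c i • x)) = span R (insert x (Set.range b)) := by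
  have hx {s : Set M} : x ∈ span R (insert x s) := subset_span (Set.mem_insert x s)
  have hb {s : Set M} {y : M} (hy : y ∈ s) : y ∈ span R (insert x s) :=
    subset_span (Set.mem_insert_of_mem x hy)
  apply le_antisymm <;> rw [span_le] <;> rintro _ (rfl | ⟨i, rfl⟩)
  · exact hx
  · exact add_mem (hb (Set.mem_range_self i)) (smul_mem _ _ hx)
  · exact hx
  · simpa using sub_mem (hb (Set.mem_range_self (f := fun i => b i + c i • x) i))
      (smul_mem _ (c i) hx)

theorem exists_apply_ne_zero_of_mem_span {R ι κ : Type*} [Semiring R] {a : ι → κ → R}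
    {x : κ → R} (hx : x ∈ Submodule.span R (Set.range a)) {j : κ} (hxj : x j ≠ 0) :
    ∃ i, a i j ≠ 0 := by
  by_contra! h
  have hker : Submodule.span R (Set.range a) ≤ LinearMap.ker (LinearMap.proj j) := by
    rw [Submodule.span_le]
    rintro _ ⟨i, rfl⟩
    exact h i
  exact hxj (hker hx)

section Saturation

variable {n : ℕ}

theorem le_sat (M : Submodule ℤ (Fin n → ℤ)) : M ≤ Sat M :=
  fun x hx => ⟨1, one_ne_zero, by simpa⟩

theorem sat_sat (M : Submodule ℤ (Fin n → ℤ)) : Sat (Sat M) = Sat M := by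
  refine le_antisymm ?_ (le_sat _)
  rintro x ⟨l, hl, m, hm, hml⟩
  exact ⟨m * l, mul_ne_zero hm hl, by rwa [mul_smul]⟩

theorem EM_sat (M : Submodule ℤ (Fin n → ℤ)) (E : Set (Fin n)) : EM (Sat M) E = EM M E := by
  refine subset_antisymm ?_ fun j ⟨hj, γ, hγ, hγj⟩ => ⟨hj, γ, le_sat M hγ, hγj⟩
  rintro j ⟨hj, γ, ⟨l, hl, hlγ⟩, hγj⟩
  exact ⟨hj, l • γ, hlγ, by simpa using ⟨hl, hγj⟩⟩

theorem WeakTransversal.exists_mem_nonneg_pos {M : Submodule ℤ (Fin n → ℤ)} {E : Set (Fin n)}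
    (h : WeakTransversal M E) :
    ∃ σ ∈ M, (∀ j ∈ E, 0 ≤ σ j) ∧ ∀ j ∈ EM M E, 0 < σ j := by
  obtain ⟨ℓ, a, ha, rfl⟩ := h
  have le_sum {j : Fin n} (hj : j ∈ E) (i : Fin ℓ) : a i j ≤ (∑ i, a i) j := by
    rw [Finset.sum_apply]
    exact Finset.single_le_sum (fun i _ => ha i j hj) (Finset.mem_univ i)
  refine ⟨∑ i, a i, Submodule.sum_mem _ fun i _ => Submodule.subset_span ⟨i, rfl⟩,
    fun j hj => ?_, ?_⟩
  · rw [Finset.sum_apply]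
    exact Finset.sum_nonneg fun i _ => ha i j hj
  · rintro j ⟨hj, γ, hγ, hγj⟩
    obtain ⟨i, hi⟩ := exists_apply_ne_zero_of_mem_span hγ hγj
    exact (lt_of_le_of_ne (ha i j hj) hi.symm).trans_le (le_sum hj i)

theorem weakTransversal_of_mem_nonneg_pos {L : Submodule ℤ (Fin n → ℤ)} {E : Set (Fin n)}
    (hL : L.FG) {σ : Fin n → ℤ} (hσ : σ ∈ L) (hσE : ∀ j ∈ E, 0 ≤ σ j)
    (hσEM : ∀ j ∈ EM L E, 0 < σ j) : WeakTransversal L E := by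
  obtain ⟨k, b, hb⟩ := Submodule.fg_iff_exists_fin_generating_family.mp hL
  set N : Fin k → ℤ := fun i => ∑ j, |b i j|
  have hbL (i : Fin k) : b i ∈ L := hb ▸ Submodule.subset_span ⟨i, rfl⟩
  have hNb (i : Fin k) (j : Fin n) : |b i j| ≤ N i :=
    Finset.single_le_sum (fun j _ => abs_nonneg (b i j)) (Finset.mem_univ j)
  have hN (i : Fin k) : 0 ≤ N i := Finset.sum_nonneg fun j _ => abs_nonneg (b i j)
  refine ⟨k + 1, Fin.cons σ fun i => b i + N i • σ, fun i j hj => ?_, ?_⟩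
  · induction i using Fin.cases with
    | zero => exact hσE j hj
    | succ i =>
      simp only [Fin.cons_succ, Pi.add_apply, Pi.smul_apply, smul_eq_mul]
      by_cases hbij : b i j = 0
      · simpa [hbij] using mul_nonneg (hN i) (hσE j hj)
      · have hσj : 1 ≤ σ j := hσEM j ⟨hj, b i, hbL i, hbij⟩
        linarith [le_mul_of_one_le_right (hN i) hσj, hNb i j, neg_abs_le (b i j)]
  · rw [Fin.range_cons, Submodule.span_insert_range_add_smul,
      Submodule.span_insert_eq_span (hb ▸ hσ), hb]

end Saturation

/-- If `M` is weak-transversal to `E`, then `Sat(M)` is transversal to `E`: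
`Sat(M)` is saturated and admits a system of `ℤ`-module generators lying in `ℤⁿ_E`. -/
theorem sat_transversal_of_weakTransversal {n : ℕ}
    (M : Submodule ℤ (Fin n → ℤ)) (E : Set (Fin n)) (h : WeakTransversal M E) :
    Sat (Sat M) = Sat M ∧ WeakTransversal (Sat M) E := by
  obtain ⟨σ, hσM, hσE, hσEM⟩ := h.exists_mem_nonneg_pos
  refine ⟨sat_sat M, weakTransversal_of_mem_nonneg_pos (IsNoetherian.noetherian _)
    (le_sat M hσM) hσE ?_⟩
  rwa [EM_sat]
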